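/- Let φ denote the standard normal density. Fix l ∈ (0,1) and u with l < u < min(1, l/(1-l)). Then for every real a, φ(a/u)/u + φ(a) - φ(a/l)/l > 0. Consequently, since ∫(φ(a) - φ(a/l)/l)da = 0, the function a ↦ φ(a/u)/u + φ(a) - φ(a/l)/l is a probability density on ℝ. -/

import Mathlib

/-!
Write `g s a = exp (-(a / s) ^ 2 / 2)`, which is increasing in the scale `s > 0`, so for
`l ≤ u` and `l ≤ 1` the term `g l a` is dominated by both `g u a` and `g 1 a`. The condition
`u < l / (1 - l)` says exactly `1 / l < 1 / u + 1`, hence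
`g l a / l < g l a / u + g l a ≤ g u a / u + g 1 a`. The three terms are centred Gaussian
densities of variances `u²`, `1`, `l²`, each of total mass one.
-/

open MeasureTheory ProbabilityTheory Real

lemma exp_neg_div_sq_half_le_of_le {s t : ℝ} (hs : 0 < s) (hst : s ≤ t) (a : ℝ) :
    exp (-(a / s) ^ 2 / 2) ≤ exp (-(a / t) ^ 2 / 2) := by
  have hsq : (a / t) ^ 2 ≤ (a / s) ^ 2 := by
    rw [div_pow, div_pow]
    gcongr
  gcongr

lemma inv_lt_inv_add_one_of_mul_one_sub_lt {l u : ℝ} (hl : 0 < l) (hu : 0 < u)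
    (h : u * (1 - l) < l) : 1 / l < 1 / u + 1 := by
  rw [div_add_one hu.ne', div_lt_div_iff₀ hl hu]
  linarith

lemma exp_div_lt_add_exp_div {l u : ℝ} (hl₀ : 0 < l) (hl₁ : l ≤ 1) (hlu : l ≤ u)
    (h : u * (1 - l) < l) (a : ℝ) :
    exp (-(a / l) ^ 2 / 2) / l < exp (-(a / u) ^ 2 / 2) / u + exp (-a ^ 2 / 2) := by
  have hu : 0 < u := hl₀.trans_le hlu
  have hscale : 1 / l < 1 / u + 1 := inv_lt_inv_add_one_of_mul_one_sub_lt hl₀ hu h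
  have hgu := exp_neg_div_sq_half_le_of_le hl₀ hlu a
  have hg1 := exp_neg_div_sq_half_le_of_le hl₀ hl₁ a
  rw [div_one] at hg1
  set g := exp (-(a / l) ^ 2 / 2)
  calc g / l = g * (1 / l) := by ring
    _ < g * (1 / u + 1) := mul_lt_mul_of_pos_left hscale (exp_pos _)
    _ = g / u + g := by ring
    _ ≤ exp (-(a / u) ^ 2 / 2) / u + exp (-a ^ 2 / 2) := by gcongr

lemma inv_sqrt_two_pi_mul_exp_div_eq_gaussianPDFReal {s : ℝ} (hs : 0 < s) (a : ℝ) :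
    (√(2 * π))⁻¹ * exp (-(a / s) ^ 2 / 2) / s = gaussianPDFReal 0 (s ^ 2).toNNReal a := by
  simp only [gaussianPDFReal_def, Real.coe_toNNReal _ (sq_nonneg s), sub_zero]
  rw [sqrt_mul (by positivity : (0 : ℝ) ≤ 2 * π) (s ^ 2), sqrt_sq hs.le]
  field_simp

lemma integrable_inv_sqrt_two_pi_mul_exp_div {s : ℝ} (hs : 0 < s) :
    Integrable fun a ↦ (√(2 * π))⁻¹ * exp (-(a / s) ^ 2 / 2) / s := by
  simp_rw [inv_sqrt_two_pi_mul_exp_div_eq_gaussianPDFReal hs]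
  exact integrable_gaussianPDFReal _ _

lemma integral_inv_sqrt_two_pi_mul_exp_div {s : ℝ} (hs : 0 < s) :
    ∫ a, (√(2 * π))⁻¹ * exp (-(a / s) ^ 2 / 2) / s = 1 := by
  simp_rw [inv_sqrt_two_pi_mul_exp_div_eq_gaussianPDFReal hs]
  exact integral_gaussianPDFReal_eq_one _ (by positivity)

/-- For `l ∈ (0,1)` and `l < u < min(1, l/(1-l))`, the function
`a ↦ φ(a/u)/u + φ(a) - φ(a/l)/l` (φ the standard normal density) is everywhere positive,
and it is a probability density on ℝ (it integrates to 1). -/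
theorem stmt9 (l u : ℝ) (hl : l ∈ Set.Ioo (0 : ℝ) 1) (hlu : l < u)
    (hu : u < min 1 (l / (1 - l))) :
    let φ : ℝ → ℝ := fun x => (Real.sqrt (2 * Real.pi))⁻¹ * Real.exp (-x ^ 2 / 2)
    (∀ a : ℝ, 0 < φ (a / u) / u + φ a - φ (a / l) / l) ∧
    (∫ a : ℝ, (φ (a / u) / u + φ a - φ (a / l) / l)) = 1 := by
  intro φ
  obtain ⟨hl₀, hl₁⟩ := hl
  have hu₀ : 0 < u := hl₀.trans hlu
  have hul : u * (1 - l) < l :=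
    (lt_div_iff₀ (sub_pos.mpr hl₁)).mp (hu.trans_le (min_le_right _ _))
  constructor
  · intro a
    have h := mul_lt_mul_of_pos_left (exp_div_lt_add_exp_div hl₀ hl₁.le hlu.le hul a)
      (by positivity : (0 : ℝ) < (√(2 * π))⁻¹)
    rw [mul_add, ← mul_div_assoc, ← mul_div_assoc] at h
    simp only [φ]
    linarith
  · have hiu := integrable_inv_sqrt_two_pi_mul_exp_div hu₀
    have hil := integrable_inv_sqrt_two_pi_mul_exp_div hl₀
    have hi1 := integrable_inv_sqrt_two_pi_mul_exp_div one_pos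
    have h11 := integral_inv_sqrt_two_pi_mul_exp_div one_pos
    simp only [div_one] at hi1 h11
    have hi : Integrable fun a ↦ φ (a / u) / u + φ a := hiu.add hi1
    rw [integral_sub hi hil, integral_add hiu hi1, integral_inv_sqrt_two_pi_mul_exp_div hu₀,
      integral_inv_sqrt_two_pi_mul_exp_div hl₀, h11]
    norm_num
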